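/- arXiv:1606.00724 — 3 statements merged into one kernel-verified Lean document; each statement's English description precedes it below -/
import Mathlib

section
/- Under the block structure assumption on B and positive definiteness of A_0, the covariance matrix C(t) = ∫_0^t e^{sB} A e^{sB^T} ds is symmetric positive definite for every t > 0 (so that the Gaussian kernel Γ_0 is well defined). -/
open MeasureTheory Matrix Finset

noncomputable section

/-- Index set for `ℝ^d` split into groups of sizes `p 0, …, p r`:
the element `⟨i, a⟩` is the `a`-th coordinate of the `i`-th group. -/
abbrev Idx (r : ℕ) (p : Fin (r + 1) → ℕ) : Type := (i : Fin (r + 1)) × Fin (p i)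

variable {r : ℕ} {p : Fin (r + 1) → ℕ}

/-- The dilation exponent `σ_j = 2i+1` for a coordinate `j` in group `i`. -/
def sigmaWt (j : Idx r p) : ℕ := 2 * (j.1 : ℕ) + 1

/-- The `B`-length `|β|_B = Σ_j σ_j β_j` of a multi-index `β`. -/
def bwt (β : Idx r p → ℕ) : ℕ := ∑ j, sigmaWt j * β j

/-- The homogeneous norm `[x]_B = Σ_j |x_j|^{1/σ_j}`. -/
def hnorm (x : Idx r p → ℝ) : ℝ := ∑ j, |x j| ^ (1 / (sigmaWt j : ℝ))

/-- Structural assumption on the matrix `B`: the group sizes are decreasing and positive,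
the only nonzero blocks are the subdiagonal ones `B_1, …, B_r`, and the block `B_i`
(of size `p i × p (i-1)`) has full rank `p i`. -/
structure IsKolB (B : Matrix (Idx r p) (Idx r p) ℝ) : Prop where
  anti : Antitone p
  ppos : ∀ i, 1 ≤ p i
  sparse : ∀ j k : Idx r p, (j.1 : ℕ) ≠ (k.1 : ℕ) + 1 → B j k = 0
  rk : ∀ i k : Fin (r + 1), (i : ℕ) = (k : ℕ) + 1 →
    (Matrix.of fun (a : Fin (p i)) (b : Fin (p k)) => B ⟨i, a⟩ ⟨k, b⟩).rank = p i

/-- Matrix exponential `e^M = Σ_n M^n / n!` (defined entrywise). -/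
def mexp (M : Matrix (Idx r p) (Idx r p) ℝ) : Matrix (Idx r p) (Idx r p) ℝ :=
  Matrix.of fun i j => ∑' n : ℕ, ((n.factorial : ℝ)⁻¹ • M ^ n) i j

/-- The `d×d` matrix whose top-left `p 0 × p 0` block is `A₀` and whose other entries vanish. -/
def embed0 (A₀ : Matrix (Fin (p 0)) (Fin (p 0)) ℝ) : Matrix (Idx r p) (Idx r p) ℝ :=
  Matrix.of fun j k =>
    if h : j.1 = 0 ∧ k.1 = 0 then
      A₀ (Fin.cast (congrArg p h.1) j.2) (Fin.cast (congrArg p h.2) k.2)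
    else 0

/-- The covariance matrix `C(t) = ∫_0^t e^{sB} A e^{sBᵀ} ds`. -/
def covMat (B A : Matrix (Idx r p) (Idx r p) ℝ) (t : ℝ) :
    Matrix (Idx r p) (Idx r p) ℝ :=
  Matrix.of fun j k => ∫ s in (0:ℝ)..t, (mexp (s • B) * A * (mexp (s • B))ᵀ) j k

/-- The Gaussian kernel
`Γ₀(t,x;s,y) = (2π)^{-d/2} |det C(s-t)|^{-1/2} exp(-⟨C(s-t)⁻¹(y-e^{(s-t)B}x), y-e^{(s-t)B}x⟩/2)`. -/
def gauss (B A : Matrix (Idx r p) (Idx r p) ℝ)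
    (t : ℝ) (x : Idx r p → ℝ) (s : ℝ) (y : Idx r p → ℝ) : ℝ :=
  (2 * Real.pi) ^ (-(Fintype.card (Idx r p) : ℝ) / 2) *
    |(covMat B A (s - t)).det| ^ (-(1:ℝ) / 2) *
    Real.exp (-(1/2) *
      ((covMat B A (s - t))⁻¹ *ᵥ (y - mexp ((s - t) • B) *ᵥ x)) ⬝ᵥ
        (y - mexp ((s - t) • B) *ᵥ x))

/-- Partial derivative `∂_{x_i}`. -/
def pdx (i : Idx r p) (f : (Idx r p → ℝ) → ℝ) : (Idx r p → ℝ) → ℝ :=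
  fun x => fderiv ℝ f x (Pi.single i 1)

/-- Iterated partial derivative `D^β = ∂_{x_1}^{β_1} ⋯ ∂_{x_d}^{β_d}`. -/
def Dx (β : Idx r p → ℕ) (f : (Idx r p → ℝ) → ℝ) : (Idx r p → ℝ) → ℝ :=
  (Finset.univ (α := Idx r p)).toList.foldr (fun i g => (pdx i)^[β i] g) f

/-- The indices of the first group (coordinates `1, …, p_0`). -/
def G0set (r : ℕ) (p : Fin (r + 1) → ℕ) : Finset (Idx r p) :=
  Finset.univ.filter fun i => (i.1 : ℕ) = 0

/-- A vector supported in the coordinates of the first group. -/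
def suppG0 (ξ : Idx r p → ℝ) : Prop := ∀ i : Idx r p, (i.1 : ℕ) ≠ 0 → ξ i = 0

/-- The vector field `Y f(t,x) = ⟨Bx, ∇_x f⟩ + ∂_t f`. -/
def Yop (B : Matrix (Idx r p) (Idx r p) ℝ)
    (f : ℝ → (Idx r p → ℝ) → ℝ) : ℝ → (Idx r p → ℝ) → ℝ :=
  fun t x => (∑ j, (B *ᵥ x) j * pdx j (f t) x) + deriv (fun τ => f τ x) t

/-- The derivative `Y^k ∂_x^β f`. -/
def YDx (B : Matrix (Idx r p) (Idx r p) ℝ) (k : ℕ) (β : Idx r p → ℕ)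
    (f : ℝ → (Idx r p → ℝ) → ℝ) : ℝ → (Idx r p → ℝ) → ℝ :=
  (Yop B)^[k] (fun t => Dx β (f t))

/-- The multi-index factorial `β! = Π_j (β_j)!`. -/
def mfact (β : Idx r p → ℕ) : ℕ := ∏ j, (β j).factorial

/-- The `n`-th order intrinsic Taylor polynomial of `a` centered at `z̄ = (tb, xb)`:
`T_n(a,z̄)(t,x) = Σ_{2k+|β|_B ≤ n} (1/(k!β!)) (Y^k ∂^β a)(z̄) (t-tb)^k (x-e^{(t-tb)B}xb)^β`,
with `T_n ≡ 0` for `n < 0`. -/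
def Tpoly (B : Matrix (Idx r p) (Idx r p) ℝ) (a : ℝ → (Idx r p → ℝ) → ℝ)
    (tb : ℝ) (xb : Idx r p → ℝ) (n : ℤ) : ℝ → (Idx r p → ℝ) → ℝ :=
  fun t x =>
    ∑ k ∈ Finset.range (n.toNat + 1),
      ∑ β ∈ Fintype.piFinset (fun _ : Idx r p => Finset.range (n.toNat + 1)),
        if 2 * (k : ℤ) + (bwt β : ℤ) ≤ n then
          ((k.factorial * mfact β : ℕ) : ℝ)⁻¹ * YDx B k β a tb xb * (t - tb) ^ k *
            ∏ j, (x j - (mexp ((t - tb) • B) *ᵥ xb) j) ^ β j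
        else 0

/-- `M̄(t) = e^{-tB} C(t) e^{-tBᵀ}`. -/
def Mbar (B A : Matrix (Idx r p) (Idx r p) ℝ) (t : ℝ) : Matrix (Idx r p) (Idx r p) ℝ :=
  mexp (-(t • B)) * covMat B A t * (mexp (-(t • B)))ᵀ

/-- The first order operator `M_i(t,x) f = (e^{tB}x)_i f + (e^{tB} M̄(t) ∇_x f)_i`. -/
def Mop (B A : Matrix (Idx r p) (Idx r p) ℝ) (τ : ℝ) (i : Idx r p)
    (f : (Idx r p → ℝ) → ℝ) : (Idx r p → ℝ) → ℝ :=
  fun x => (mexp (τ • B) *ᵥ x) i * f x + ((mexp (τ • B) * Mbar B A τ) *ᵥ fun j => pdx j f x) i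

/-- The composition `M^β = M_1^{β_1} ∘ ⋯ ∘ M_d^{β_d}`. -/
def Mpow (B A : Matrix (Idx r p) (Idx r p) ℝ) (τ : ℝ) (β : Idx r p → ℕ)
    (f : (Idx r p → ℝ) → ℝ) : (Idx r p → ℝ) → ℝ :=
  (Finset.univ (α := Idx r p)).toList.foldr (fun i g => (Mop B A τ i)^[β i] g) f

/-- The shifted operator `(M_i(τ,x) - c) f`. -/
def MopShift (B A : Matrix (Idx r p) (Idx r p) ℝ) (τ : ℝ) (c : ℝ) (i : Idx r p)
    (f : (Idx r p → ℝ) → ℝ) : (Idx r p → ℝ) → ℝ :=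
  fun x => Mop B A τ i f x - c * f x

/-- The composition `(M(τ,x) - c)^β` of shifted operators. -/
def MshiftPow (B A : Matrix (Idx r p) (Idx r p) ℝ) (τ : ℝ) (c : Idx r p → ℝ)
    (β : Idx r p → ℕ) (f : (Idx r p → ℝ) → ℝ) : (Idx r p → ℝ) → ℝ :=
  (Finset.univ (α := Idx r p)).toList.foldr (fun i g => (MopShift B A τ (c i) i)^[β i] g) f

/-- The operator `W_i(τ) f = (e^{-τBᵀ} ∇_x f)_i`. -/
def Wop (B : Matrix (Idx r p) (Idx r p) ℝ) (τ : ℝ) (i : Idx r p)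
    (f : (Idx r p → ℝ) → ℝ) : (Idx r p → ℝ) → ℝ :=
  fun x => (mexp (-(τ • Bᵀ)) *ᵥ fun j => pdx j f x) i

/-- The composition `W^β(τ) = W_1^{β_1}(τ) ∘ ⋯ ∘ W_d^{β_d}(τ)`. -/
def Wpow (B : Matrix (Idx r p) (Idx r p) ℝ) (τ : ℝ) (β : Idx r p → ℕ)
    (f : (Idx r p → ℝ) → ℝ) : (Idx r p → ℝ) → ℝ :=
  (Finset.univ (α := Idx r p)).toList.foldr (fun i g => (Wop B τ i)^[β i] g) f

/-- The Taylor polynomial `T_n(a,z̄)(s,·)` with the commuting operators `M_i(τ,x)` substituted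
for the spatial arguments. -/
def TpolyOp (B A : Matrix (Idx r p) (Idx r p) ℝ) (a : ℝ → (Idx r p → ℝ) → ℝ)
    (tb : ℝ) (xb : Idx r p → ℝ) (n : ℤ) (s τ : ℝ)
    (f : (Idx r p → ℝ) → ℝ) : (Idx r p → ℝ) → ℝ :=
  fun x =>
    ∑ k ∈ Finset.range (n.toNat + 1),
      ∑ β ∈ Fintype.piFinset (fun _ : Idx r p => Finset.range (n.toNat + 1)),
        if 2 * (k : ℤ) + (bwt β : ℤ) ≤ n then
          ((k.factorial * mfact β : ℕ) : ℝ)⁻¹ * YDx B k β a tb xb * (s - tb) ^ k *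
            MshiftPow B A τ (mexp ((s - tb) • B) *ᵥ xb) β f x
        else 0

/-- The operator `G_n(t,s,x)` of the expansion. -/
def Gop (B A : Matrix (Idx r p) (Idx r p) ℝ)
    (a : Idx r p → Idx r p → ℝ → (Idx r p → ℝ) → ℝ)
    (aD : Idx r p → ℝ → (Idx r p → ℝ) → ℝ) (tb : ℝ) (xb : Idx r p → ℝ)
    (n : ℤ) (t s : ℝ) (f : (Idx r p → ℝ) → ℝ) : (Idx r p → ℝ) → ℝ :=
  fun x =>
    (1/2) * ∑ i ∈ G0set r p, ∑ j ∈ G0set r p,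
        (TpolyOp B A (a i j) tb xb n s (s - t) (Wop B (s - t) i (Wop B (s - t) j f)) x
          - TpolyOp B A (a i j) tb xb (n - 1) s (s - t) (Wop B (s - t) i (Wop B (s - t) j f)) x)
      + ∑ i ∈ G0set r p,
        (TpolyOp B A (aD i) tb xb (n - 1) s (s - t) (Wop B (s - t) i f) x
          - TpolyOp B A (aD i) tb xb (n - 2) s (s - t) (Wop B (s - t) i f) x)

/-- `((K_n - K_{n-1}) g)(s,ξ)` for a purely spatial function `g`. -/
def Kdiff (B : Matrix (Idx r p) (Idx r p) ℝ)
    (a : Idx r p → Idx r p → ℝ → (Idx r p → ℝ) → ℝ)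
    (aD : Idx r p → ℝ → (Idx r p → ℝ) → ℝ) (tb : ℝ) (xb : Idx r p → ℝ)
    (n : ℤ) (g : (Idx r p → ℝ) → ℝ) (s : ℝ) (ξ : Idx r p → ℝ) : ℝ :=
  (1/2) * ∑ i ∈ G0set r p, ∑ j ∈ G0set r p,
      (Tpoly B (a i j) tb xb n s ξ - Tpoly B (a i j) tb xb (n - 1) s ξ) * pdx i (pdx j g) ξ
    + ∑ i ∈ G0set r p, (Tpoly B (aD i) tb xb (n - 1) s ξ - Tpoly B (aD i) tb xb (n - 2) s ξ) *
        pdx i g ξ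

/-- The matrix `A(z̄)` with top-left block `(a_{ij}(z̄))` and zeros elsewhere. -/
def AzMat (a : Idx r p → Idx r p → ℝ → (Idx r p → ℝ) → ℝ) (tb : ℝ) (xb : Idx r p → ℝ) :
    Matrix (Idx r p) (Idx r p) ℝ :=
  Matrix.of fun i j => if (i.1 : ℕ) = 0 ∧ (j.1 : ℕ) = 0 then a i j tb xb else 0

/-- `u₀(t,x) = ∫ Γ₀(t,x;T,y) φ(y) dy`. -/
def u0fn (B A : Matrix (Idx r p) (Idx r p) ℝ) (T : ℝ) (φ : (Idx r p → ℝ) → ℝ)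
    (t : ℝ) (x : Idx r p → ℝ) : ℝ :=
  ∫ y : Idx r p → ℝ, gauss B A t x T y * φ y

/-- The Duhamel recursion: `u_0 = ∫ Γ₀ φ` and
`u_n(t,x) = ∫_t^T ∫ Γ₀(t,x;s,ξ) Σ_{h=1}^n ((K_h - K_{h-1}) u_{n-h})(s,ξ) dξ ds`. -/
def useq (B : Matrix (Idx r p) (Idx r p) ℝ)
    (a : Idx r p → Idx r p → ℝ → (Idx r p → ℝ) → ℝ)
    (aD : Idx r p → ℝ → (Idx r p → ℝ) → ℝ) (tb : ℝ) (xb : Idx r p → ℝ)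
    (T : ℝ) (φ : (Idx r p → ℝ) → ℝ) : ℕ → ℝ → (Idx r p → ℝ) → ℝ
  | 0 => u0fn B (AzMat a tb xb) T φ
  | n + 1 => fun t x =>
      ∫ s in t..T, ∫ ξ : Idx r p → ℝ, gauss B (AzMat a tb xb) t x s ξ *
        ∑ h ∈ Finset.range (n + 1),
          Kdiff B a aD tb xb ((h : ℤ) + 1) (useq B a aD tb xb T φ (n - h) s) s ξ
  termination_by n => n
  decreasing_by omega

/-- Nested integral of a composition of operators `G_{i_1}(t,s_1) ⋯ G_{i_h}(t,s_h)` applied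
to `u`, over the simplex `lo ≤ s_1 ≤ ⋯ ≤ s_h ≤ T`. -/
def Lrec (B A : Matrix (Idx r p) (Idx r p) ℝ)
    (a : Idx r p → Idx r p → ℝ → (Idx r p → ℝ) → ℝ)
    (aD : Idx r p → ℝ → (Idx r p → ℝ) → ℝ) (tb : ℝ) (xb : Idx r p → ℝ)
    (t T : ℝ) (u : (Idx r p → ℝ) → ℝ) : List ℕ → ℝ → (Idx r p → ℝ) → ℝ
  | [] => fun _ => u
  | m :: ms => fun lo x =>
      ∫ s in lo..T, Gop B A a aD tb xb (m : ℤ) t s (Lrec B A a aD tb xb t T u ms s) x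

/-- The operator `L_n(t,T,x) = Σ_{h=1}^n ∫_t^T ds_1 ⋯ ∫_{s_{h-1}}^T ds_h
Σ_{i_1+⋯+i_h=n, i_j ≥ 1} G_{i_1}(t,s_1) ⋯ G_{i_h}(t,s_h)`. -/
def Lop (B A : Matrix (Idx r p) (Idx r p) ℝ)
    (a : Idx r p → Idx r p → ℝ → (Idx r p → ℝ) → ℝ)
    (aD : Idx r p → ℝ → (Idx r p → ℝ) → ℝ) (tb : ℝ) (xb : Idx r p → ℝ)
    (n : ℕ) (t T : ℝ) (u : (Idx r p → ℝ) → ℝ) : (Idx r p → ℝ) → ℝ :=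
  fun x => ∑ h ∈ Finset.Icc 1 n,
    ∑ iv ∈ (Fintype.piFinset fun _ : Fin h => Finset.Icc 1 n).filter (fun iv => ∑ j, iv j = n),
      Lrec B A a aD tb xb t T u (List.ofFn iv) t x

/-- The dilation matrix `D₀(λ) = diag(λ^{σ_1}, …, λ^{σ_d})`. -/
def D0mat (r : ℕ) (p : Fin (r + 1) → ℕ) (lam : ℝ) : Matrix (Idx r p) (Idx r p) ℝ :=
  Matrix.diagonal fun j => lam ^ sigmaWt j

/-- The index set `J_n` of Lemma A.8. -/
def Jset (r : ℕ) (p : Fin (r + 1) → ℕ) (n : ℕ) :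
    Finset ((Idx r p → ℕ) × (Idx r p → ℕ)) :=
  ((Fintype.piFinset fun _ : Idx r p => Finset.range (3 * n + 1)) ×ˢ
    (Fintype.piFinset fun _ : Idx r p => Finset.range (n + 1))).filter
    fun q => 1 ≤ ∑ j, q.1 j ∧ ∑ j, q.1 j ≤ 3 * n ∧ bwt q.2 ≤ n ∧
      0 ≤ (bwt q.1 : ℤ) - (bwt q.2 : ℤ) + (n : ℤ)

/-- The index set of pairs `(δ, α)` with `|δ| + |α| ≤ |β|` and `|δ|_B - |α|_B ≤ |β|_B`. -/
def Sset (β : Idx r p → ℕ) : Finset ((Idx r p → ℕ) × (Idx r p → ℕ)) :=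
  ((Fintype.piFinset fun _ : Idx r p => Finset.range (∑ j, β j + 1)) ×ˢ
    (Fintype.piFinset fun _ : Idx r p => Finset.range (∑ j, β j + 1))).filter
    fun q => (∑ j, q.1 j) + (∑ j, q.2 j) ≤ ∑ j, β j ∧
      (bwt q.1 : ℤ) - (bwt q.2 : ℤ) ≤ (bwt β : ℤ)

/-- The index set of multi-indices `α` with `|α| = |β|` and `|α|_B ≥ |β|_B`. -/
def Wset (β : Idx r p → ℕ) : Finset (Idx r p → ℕ) :=
  (Fintype.piFinset fun _ : Idx r p => Finset.range (∑ j, β j + 1)).filter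
    fun α => ∑ j, α j = ∑ j, β j ∧ bwt β ≤ bwt α

/-! Since `B` is nilpotent, `e^{sB}` is a polynomial in `s`, and
`C(t) = ∫₀ᵗ R(s)ᵀ A₀ R(s) ds` with `R(s) = Π₀ e^{sBᵀ}`, where `Π₀` restricts a vector to the
first group of coordinates. Hence `xᵀ C(t) x = ∫₀ᵗ ⟨A₀ R(s)x, R(s)x⟩ ds` is positive unless the
polynomial `s ↦ R(s)x` vanishes on `[0, t]`, i.e. unless the first-group components of
`xᵀ Bⁿ` vanish for all `n ≤ r`. This is excluded by the Kalman rank condition: if `x` lives on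
the `n`-th group, then `xᵀ B` lives on the `(n-1)`-th one, and it vanishes only if `x` does,
because the block `B_n` has full row rank.
-/

theorem Matrix.dotProduct_mulVec_intervalIntegral {n : Type*} [Fintype n]
    {Q : ℝ → Matrix n n ℝ} (hQ : Continuous Q) (a b : ℝ) (x y : n → ℝ) :
    x ⬝ᵥ (of fun j k => ∫ s in a..b, Q s j k) *ᵥ y = ∫ s in a..b, x ⬝ᵥ Q s *ᵥ y := by
  have hcont : ∀ j k, Continuous fun s => x j * (Q s j k * y k) :=
    fun j k => continuous_const.mul ((hQ.matrix_elem j k).mul continuous_const)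
  simp only [dotProduct, mulVec, of_apply, Finset.mul_sum]
  symm
  rw [intervalIntegral.integral_finsetSum (f := fun j s => ∑ k, x j * (Q s j k * y k))
    fun j _ => (continuous_finsetSum _ fun k _ => hcont j k).intervalIntegrable _ _]
  refine Finset.sum_congr rfl fun j _ => ?_
  rw [intervalIntegral.integral_finsetSum (f := fun k s => x j * (Q s j k * y k))
    fun k _ => (hcont j k).intervalIntegrable _ _]
  refine Finset.sum_congr rfl fun k _ => ?_
  rw [intervalIntegral.integral_const_mul, intervalIntegral.integral_mul_const]

theorem Matrix.dotProduct_transpose_mul_mul_mulVec {m n : Type*} [Fintype m] [Fintype n]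
    (A : Matrix m m ℝ) (R : Matrix m n ℝ) (x : n → ℝ) :
    x ⬝ᵥ (Rᵀ * A * R) *ᵥ x = (R *ᵥ x) ⬝ᵥ A *ᵥ (R *ᵥ x) := by
  rw [← mulVec_mulVec, ← mulVec_mulVec, dotProduct_mulVec, vecMul_transpose]

theorem Matrix.PosDef.intervalIntegral_transpose_mul_mul {m n : Type*} [Fintype m] [Fintype n]
    {A : Matrix m m ℝ} (hA : A.PosDef) {R : ℝ → Matrix m n ℝ} (hR : Continuous R)
    {a b : ℝ} (hab : a < b) (hobs : ∀ x, (∀ s ∈ Set.Icc a b, R s *ᵥ x = 0) → x = 0) :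
    (of fun j k => ∫ s in a..b, ((R s)ᵀ * A * R s) j k).PosDef := by
  have hQ : Continuous fun s => (R s)ᵀ * A * R s :=
    (hR.matrix_transpose.matrix_mul continuous_const).matrix_mul hR
  have hAt : Aᵀ = A := by rw [← conjTranspose_eq_transpose_of_trivial]; exact hA.isHermitian.eq
  have hsymm : ∀ s, ((R s)ᵀ * A * R s)ᵀ = (R s)ᵀ * A * R s := fun s => by
    rw [transpose_mul, transpose_mul, transpose_transpose, hAt, Matrix.mul_assoc]
  refine posDef_iff_dotProduct_mulVec.mpr ⟨?_, fun x hx => ?_⟩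
  · ext j k
    simp only [conjTranspose_apply, star_trivial, of_apply]
    exact intervalIntegral.integral_congr fun s _ => congrFun (congrFun (hsymm s) j) k
  · obtain ⟨s₀, hs₀, hRx⟩ : ∃ s ∈ Set.Icc a b, R s *ᵥ x ≠ 0 := by
      by_contra! h
      exact hx (hobs x h)
    rw [star_trivial, dotProduct_mulVec_intervalIntegral hQ]
    refine intervalIntegral.integral_pos hab ?_ (fun s _ => ?_) ⟨s₀, hs₀, ?_⟩
    · exact (continuous_const.dotProduct (hQ.matrix_mulVec continuous_const)).continuousOn
    · rw [dotProduct_transpose_mul_mul_mulVec]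
      simpa using hA.posSemidef.dotProduct_mulVec_nonneg (R s *ᵥ x)
    · rw [dotProduct_transpose_mul_mul_mulVec]
      simpa using hA.dotProduct_mulVec_pos hRx

theorem eq_zero_of_sum_mul_pow_eq_zero {S : Set ℝ} (hS : S.Infinite) {N : ℕ} {c : ℕ → ℝ}
    (h : ∀ s ∈ S, ∑ n ∈ range N, c n * s ^ n = 0) {n : ℕ} (hn : n < N) : c n = 0 := by
  set P : Polynomial ℝ := ∑ n ∈ range N, Polynomial.C (c n) * Polynomial.X ^ n
  have hP : P = 0 := Polynomial.eq_zero_of_infinite_isRoot P <| hS.mono fun s hs => by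
    simpa [P, Polynomial.eval_finsetSum] using h s hs
  simpa [P, Polynomial.finsetSum_coeff, Polynomial.coeff_C_mul_X_pow, hn] using
    congrArg (Polynomial.coeff · n) hP

theorem mexp_smul_eq_sum {M : Matrix (Idx r p) (Idx r p) ℝ} {N : ℕ} (hM : M ^ N = 0) (s : ℝ) :
    mexp (s • M) = ∑ n ∈ range N, (s ^ n / n.factorial) • M ^ n := by
  ext j k
  rw [mexp, of_apply, tsum_eq_sum (s := range N) fun n hn => by
    simp [smul_pow, pow_eq_zero_of_le (not_lt.mp (mem_range.not.mp hn)) hM]]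
  simp only [Matrix.sum_apply, Matrix.smul_apply, smul_pow, smul_eq_mul, div_eq_mul_inv]
  exact Finset.sum_congr rfl fun n _ => by ring

theorem Fintype.sum_sigma_eq_sum_fiber {ι : Type*} [Fintype ι] {κ : ι → Type*}
    [∀ i, Fintype (κ i)] {M : Type*} [AddCommMonoid M] {f : Sigma κ → M} (i : ι)
    (hf : ∀ j : Sigma κ, j.1 ≠ i → f j = 0) : ∑ j, f j = ∑ a, f ⟨i, a⟩ := by
  classical
  rw [← Finset.univ_sigma_univ, Finset.sum_sigma]
  exact Finset.sum_eq_single i (fun i' _ hi' => Finset.sum_eq_zero fun a _ => hf ⟨i', a⟩ hi')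
    (by simp)

def firstGroupProj (r : ℕ) (p : Fin (r + 1) → ℕ) : Matrix (Fin (p 0)) (Idx r p) ℝ :=
  of fun a j => if j = ⟨0, a⟩ then 1 else 0

theorem firstGroupProj_mulVec (y : Idx r p → ℝ) :
    firstGroupProj r p *ᵥ y = fun a => y ⟨0, a⟩ := by
  ext a
  simp [firstGroupProj, mulVec, dotProduct]

theorem embed0_eq_transpose_mul_mul (A₀ : Matrix (Fin (p 0)) (Fin (p 0)) ℝ) :
    embed0 A₀ = (firstGroupProj r p)ᵀ * A₀ * firstGroupProj r p := by
  ext ⟨i, a⟩ ⟨k, b⟩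
  obtain rfl | hi := eq_or_ne i 0
  · obtain rfl | hk := eq_or_ne k 0
    · simp [embed0, firstGroupProj, mul_apply]
    · simp [embed0, firstGroupProj, mul_apply, hk]
  · simp [embed0, firstGroupProj, mul_apply, hi]

namespace IsKolB

variable {B : Matrix (Idx r p) (Idx r p) ℝ}

theorem pow_apply_eq_zero (hB : IsKolB B) {n : ℕ} {j k : Idx r p} (h : (j.1 : ℕ) ≠ k.1 + n) :
    (B ^ n) j k = 0 := by
  induction n generalizing j with
  | zero =>
    have : j ≠ k := by rintro rfl; omega
    simp [one_apply, this]
  | succ n ih =>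
    rw [pow_succ', mul_apply]
    refine Finset.sum_eq_zero fun m _ => ?_
    by_cases hjm : (j.1 : ℕ) = m.1 + 1
    · rw [ih (by omega), mul_zero]
    · rw [hB.sparse j m hjm, zero_mul]

theorem pow_eq_zero (hB : IsKolB B) : B ^ (r + 1) = 0 := by
  ext j k
  exact hB.pow_apply_eq_zero (by have := j.1.isLt; omega)

theorem continuous_mexp_smul (hB : IsKolB B) : Continuous fun s : ℝ => mexp (s • B) := by
  simp only [mexp_smul_eq_sum hB.pow_eq_zero]
  fun_prop

theorem eq_zero_of_vecMul_eq_zero (hB : IsKolB B) {i k : Fin (r + 1)} (hik : (i : ℕ) = k + 1)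
    {v : Idx r p → ℝ} (hv : ∀ j : Idx r p, (j.1 : ℕ) ≠ i → v j = 0)
    (h : ∀ b, (v ᵥ* B) ⟨k, b⟩ = 0) : v = 0 := by
  set M : Matrix (Fin (p i)) (Fin (p k)) ℝ := of fun a b => B ⟨i, a⟩ ⟨k, b⟩
  have hinj : Function.Injective M.vecMul := by
    rw [vecMul_injective_iff, linearIndependent_iff_card_eq_finrank_span, Set.finrank,
      ← rank_eq_finrank_span_row, hB.rk i k hik, Fintype.card_fin]
  have hu : (fun a => v ⟨i, a⟩) ᵥ* M = 0 := by
    ext b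
    rw [Pi.zero_apply, ← h b, vecMul, vecMul, dotProduct, dotProduct,
      Fintype.sum_sigma_eq_sum_fiber i fun j hj => by rw [hv j (Fin.val_ne_of_ne hj), zero_mul]]
    rfl
  ext ⟨i', a⟩
  by_cases hi : i' = i
  · subst hi
    exact congrFun (hinj (hu.trans (zero_vecMul M).symm)) a
  · exact hv _ (Fin.val_ne_of_ne hi)

theorem eq_zero_of_vecMul_pow_apply_eq_zero (hB : IsKolB B) {n : ℕ} (hn : n ≤ r)
    {v : Idx r p → ℝ} (hv : ∀ j : Idx r p, (j.1 : ℕ) ≠ n → v j = 0)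
    (h : ∀ a, (v ᵥ* B ^ n) ⟨0, a⟩ = 0) : v = 0 := by
  induction n generalizing v with
  | zero =>
    ext ⟨i, a⟩
    rw [Pi.zero_apply]
    by_cases hi : i = 0
    · subst hi
      simpa only [pow_zero, vecMul_one] using h a
    · exact hv _ fun h => hi (Fin.ext h)
  | succ n ih =>
    have hw : v ᵥ* B = 0 := by
      refine ih (by omega) (fun j hj => Finset.sum_eq_zero fun k _ => ?_) ?_
      · show v k * B k j = 0
        by_cases hk : (k.1 : ℕ) = n + 1
        · rw [hB.sparse k j (by omega), mul_zero]
        · rw [hv k hk, zero_mul]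
      · simpa [vecMul_vecMul, ← pow_succ'] using h
    exact hB.eq_zero_of_vecMul_eq_zero (i := ⟨n + 1, by omega⟩) (k := ⟨n, by omega⟩) rfl hv
      fun b => congrFun hw _

theorem eq_zero_of_forall_vecMul_pow_apply_eq_zero (hB : IsKolB B) {x : Idx r p → ℝ}
    (h : ∀ n ≤ r, ∀ a, (x ᵥ* B ^ n) ⟨0, a⟩ = 0) : x = 0 := by
  ext ⟨i, b⟩
  set v : Idx r p → ℝ := fun j => if j.1 = i then x j else 0
  have hv : v = 0 := by
    refine hB.eq_zero_of_vecMul_pow_apply_eq_zero (n := i) (by omega)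
      (fun j hj => if_neg fun h => hj (congrArg Fin.val h)) fun a => ?_
    rw [← h i (by omega) a]
    refine Finset.sum_congr rfl fun k _ => ?_
    show v k * (B ^ (i : ℕ)) k ⟨0, a⟩ = x k * (B ^ (i : ℕ)) k ⟨0, a⟩
    by_cases hk : k.1 = i
    · simp [v, hk]
    · rw [hB.pow_apply_eq_zero (by simpa using Fin.val_ne_of_ne hk)]
      simp
  simpa [v] using congrFun hv ⟨i, b⟩

theorem eq_zero_of_forall_vecMul_mexp_apply_eq_zero (hB : IsKolB B) {S : Set ℝ}
    (hS : S.Infinite) {x : Idx r p → ℝ} (h : ∀ s ∈ S, ∀ a, (x ᵥ* mexp (s • B)) ⟨0, a⟩ = 0) :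
    x = 0 := by
  refine hB.eq_zero_of_forall_vecMul_pow_apply_eq_zero fun n hn a => ?_
  have := eq_zero_of_sum_mul_pow_eq_zero hS (N := r + 1) (n := n)
    (c := fun n => (x ᵥ* B ^ n) ⟨0, a⟩ / n.factorial) (fun s hs => ?_) (by omega)
  · simpa [Nat.factorial_ne_zero] using this
  · rw [← h s hs a, mexp_smul_eq_sum hB.pow_eq_zero]
    simp only [vecMul_sum, vecMul_smul, Finset.sum_apply, Pi.smul_apply, smul_eq_mul]
    exact Finset.sum_congr rfl fun n _ => by ring

end IsKolB

/-- Under the block structure assumption on `B` and positive definiteness of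
`A₀`, the covariance matrix `C(t) = ∫_0^t e^{sB} A e^{sBᵀ} ds` is symmetric positive definite
for every `t > 0`. -/
theorem covMat_posDef {r : ℕ} {p : Fin (r + 1) → ℕ}
    (B : Matrix (Idx r p) (Idx r p) ℝ) (hB : IsKolB B)
    (A₀ : Matrix (Fin (p 0)) (Fin (p 0)) ℝ) (hA₀ : A₀.PosDef)
    {t : ℝ} (ht : 0 < t) :
    (covMat B (embed0 A₀) t).PosDef := by
  set R : ℝ → Matrix (Fin (p 0)) (Idx r p) ℝ := fun s => firstGroupProj r p * (mexp (s • B))ᵀ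
  have hcov :
      covMat B (embed0 A₀) t = of fun j k => ∫ s in (0:ℝ)..t, ((R s)ᵀ * A₀ * R s) j k := by
    ext j k
    simp only [covMat, of_apply, R, embed0_eq_transpose_mul_mul, transpose_mul,
      transpose_transpose, Matrix.mul_assoc]
  rw [hcov]
  refine hA₀.intervalIntegral_transpose_mul_mul
    (continuous_const.matrix_mul hB.continuous_mexp_smul.matrix_transpose) ht fun x hx => ?_
  refine hB.eq_zero_of_forall_vecMul_mexp_apply_eq_zero (Set.Icc_infinite ht) fun s hs a => ?_
  simpa [R, ← mulVec_mulVec, firstGroupProj_mulVec, mulVec_transpose] using congrFun (hx s hs) a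

end
end

section
/- The components of the operator M(s-t,x) commute when applied to derivatives of the Gaussian kernel: for all i, j ∈ {1,...,d}, every multi-index β ∈ ℕ_0^d, all t < s and x, y ∈ ℝ^d, M_i(s-t,x) M_j(s-t,x) D_x^β Γ_0(t,x;s,y) = M_j(s-t,x) M_i(s-t,x) D_x^β Γ_0(t,x;s,y). -/
open MeasureTheory Matrix Finset

noncomputable section

variable {r : ℕ} {p : Fin (r + 1) → ℕ}

/-!
With `E = e^{τB}` and `Q = e^{τB} M̄(τ)`, `M_i f = (Ex)_i f + ∂_{Q_i} f` is the sum of a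
multiplication by a linear function and a constant-coefficient derivation. Two derivations commute
on `C²` functions (Schwarz), two multiplications commute, and the cross terms give
`[M_i, M_j] = (E Q_j)_i - (E Q_i)_j = (Q Eᵀ)_{ji} - (Q Eᵀ)_{ij}`, which vanishes because
`Q Eᵀ = e^{τB} M̄(τ) e^{τBᵀ}` is symmetric as soon as `A` is.
-/

open scoped ContDiff

theorem Matrix.IsSymm.mulVec_row_mul_comm {n R : Type*} [Fintype n] [CommSemiring R]
    {S : Matrix n n R} (hS : S.IsSymm) (E : Matrix n n R) (i j : n) :
    (E *ᵥ (E * S) i) j = (E *ᵥ (E * S) j) i := by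
  have hsymm : (E * S * Eᵀ).IsSymm := by
    rw [IsSymm, transpose_mul, transpose_mul, transpose_transpose, hS.eq, Matrix.mul_assoc]
  have hentry : ∀ a b, (E *ᵥ (E * S) a) b = (E * S * Eᵀ) a b := fun a b => by
    simp only [mulVec, dotProduct, mul_apply, transpose_apply, mul_comm]
  rw [hentry, hentry, hsymm.apply]

theorem isSymm_embed0 {A₀ : Matrix (Fin (p 0)) (Fin (p 0)) ℝ} (hA₀ : A₀.IsSymm) :
    (embed0 (r := r) A₀).IsSymm := by
  refine IsSymm.ext fun j k => ?_
  by_cases hj : j.1 = 0 <;> by_cases hk : k.1 = 0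
  · simpa [embed0, hj, hk] using hA₀.apply _ _
  all_goals simp [embed0, hj, hk]

theorem isSymm_covMat {B A : Matrix (Idx r p) (Idx r p) ℝ} (hA : A.IsSymm) (τ : ℝ) :
    (covMat B A τ).IsSymm := by
  have hintegrand : ∀ σ : ℝ, (mexp (σ • B) * A * (mexp (σ • B))ᵀ).IsSymm := fun σ => by
    rw [IsSymm, transpose_mul, transpose_mul, transpose_transpose, hA.eq, Matrix.mul_assoc]
  refine IsSymm.ext fun j k => ?_
  simp only [covMat, of_apply, (hintegrand _).apply]

theorem isSymm_Mbar {B A : Matrix (Idx r p) (Idx r p) ℝ} (hA : A.IsSymm) (τ : ℝ) :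
    (Mbar B A τ).IsSymm := by
  rw [Mbar, IsSymm, transpose_mul, transpose_mul, transpose_transpose, (isSymm_covMat hA τ).eq,
    Matrix.mul_assoc]

theorem contDiff_pdx {m n : WithTop ℕ∞} {f : (Idx r p → ℝ) → ℝ} (hf : ContDiff ℝ n f)
    (hmn : m + 1 ≤ n) (i : Idx r p) : ContDiff ℝ m (pdx i f) :=
  (hf.fderiv_right hmn).clm_apply contDiff_const

theorem contDiff_Dx {f : (Idx r p → ℝ) → ℝ} (hf : ContDiff ℝ ∞ f) (β : Idx r p → ℕ) :
    ContDiff ℝ ∞ (Dx β f) := by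
  have hiter : ∀ (i : Idx r p) (n : ℕ) {g : (Idx r p → ℝ) → ℝ}, ContDiff ℝ ∞ g →
      ContDiff ℝ ∞ ((pdx i)^[n] g) := fun i n => by
    induction n with
    | zero => exact fun hg => hg
    | succ n ih => exact fun hg => ih (contDiff_pdx hg (by simp) i)
  unfold Dx
  induction (Finset.univ (α := Idx r p)).toList with
  | nil => exact hf
  | cons a l ih => exact hiter a (β a) ih

theorem contDiff_gauss (B A : Matrix (Idx r p) (Idx r p) ℝ) (t s : ℝ) (y : Idx r p → ℝ) :
    ContDiff ℝ ∞ (fun x => gauss B A t x s y) := by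
  simp only [gauss, dotProduct, mulVec, Pi.sub_apply]
  fun_prop

theorem Mop_apply_eq_fderiv (B A : Matrix (Idx r p) (Idx r p) ℝ) (τ : ℝ) (i : Idx r p)
    (f : (Idx r p → ℝ) → ℝ) (x : Idx r p → ℝ) :
    Mop B A τ i f x =
      (mexp (τ • B) *ᵥ x) i * f x + fderiv ℝ f x ((mexp (τ • B) * Mbar B A τ) i) := by
  conv_rhs => rw [← Finset.univ_sum_single ((mexp (τ • B) * Mbar B A τ) i), map_sum]
  refine congrArg _ (Finset.sum_congr rfl fun k _ => ?_)
  show _ * fderiv ℝ f x (Pi.single k 1) = _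
  rw [← smul_eq_mul, ← map_smul, ← Pi.single_smul', smul_eq_mul, mul_one]

theorem Mop_Mop_apply (B A : Matrix (Idx r p) (Idx r p) ℝ) (τ : ℝ) (i j : Idx r p)
    {f : (Idx r p → ℝ) → ℝ} (hf : ContDiff ℝ 2 f) (x : Idx r p → ℝ) :
    Mop B A τ i (Mop B A τ j f) x =
      (mexp (τ • B) *ᵥ x) i * (mexp (τ • B) *ᵥ x) j * f x
        + (mexp (τ • B) *ᵥ x) i * fderiv ℝ f x ((mexp (τ • B) * Mbar B A τ) j)
        + (mexp (τ • B) *ᵥ x) j * fderiv ℝ f x ((mexp (τ • B) * Mbar B A τ) i)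
        + (mexp (τ • B) *ᵥ (mexp (τ • B) * Mbar B A τ) i) j * f x
        + fderiv ℝ (fderiv ℝ f) x ((mexp (τ • B) * Mbar B A τ) i)
            ((mexp (τ • B) * Mbar B A τ) j) := by
  set E := mexp (τ • B)
  set Q := E * Mbar B A τ
  have hMop : Mop B A τ j f = fun z => (E *ᵥ z) j * f z + fderiv ℝ f z (Q j) :=
    funext (Mop_apply_eq_fderiv B A τ j f)
  have hE : HasFDerivAt (fun z => (E *ᵥ z) j)
      ((ContinuousLinearMap.proj j).comp (LinearMap.toContinuousLinearMap E.mulVecLin)) x :=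
    ((ContinuousLinearMap.proj j).comp (LinearMap.toContinuousLinearMap E.mulVecLin)).hasFDerivAt
  have hf' : DifferentiableAt ℝ (fderiv ℝ f) x :=
    (hf.fderiv_right (m := 1) le_rfl).differentiable one_ne_zero x
  have hd : HasFDerivAt (fun z => (E *ᵥ z) j * f z + fderiv ℝ f z (Q j)) _ x :=
    (hE.mul (hf.differentiable two_ne_zero x).hasFDerivAt).add
      (hf'.hasFDerivAt.clm_apply (hasFDerivAt_const (Q j) x))
  rw [Mop_apply_eq_fderiv, hMop, hd.fderiv]
  simp only [ContinuousLinearMap.comp_zero, zero_add, _root_.add_apply, _root_.smul_apply,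
    smul_eq_mul, ContinuousLinearMap.comp_apply, LinearMap.coe_toContinuousLinearMap',
    mulVecBilin_apply, ContinuousLinearMap.proj_apply, ContinuousLinearMap.flip_apply]
  ring

theorem Mop_comm {B A : Matrix (Idx r p) (Idx r p) ℝ} (hA : A.IsSymm) (τ : ℝ) (i j : Idx r p)
    {f : (Idx r p → ℝ) → ℝ} (hf : ContDiff ℝ 2 f) (x : Idx r p → ℝ) :
    Mop B A τ i (Mop B A τ j f) x = Mop B A τ j (Mop B A τ i f) x := by
  rw [Mop_Mop_apply B A τ i j hf, Mop_Mop_apply B A τ j i hf,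
    (isSymm_Mbar hA τ).mulVec_row_mul_comm, (hf.contDiffAt.isSymmSndFDerivAt (by simp)).eq]
  ring

theorem Mop_comm_on_gauss_general {r : ℕ} {p : Fin (r + 1) → ℕ}
    (B : Matrix (Idx r p) (Idx r p) ℝ)
    (A₀ : Matrix (Fin (p 0)) (Fin (p 0)) ℝ) (hA₀ : A₀.PosDef)
    (i j : Idx r p) (β : Idx r p → ℕ)
    (t s : ℝ) (x y : Idx r p → ℝ) :
    Mop B (embed0 A₀) (s - t) i
        (Mop B (embed0 A₀) (s - t) j (Dx β (fun x' => gauss B (embed0 A₀) t x' s y))) x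
      = Mop B (embed0 A₀) (s - t) j
          (Mop B (embed0 A₀) (s - t) i (Dx β (fun x' => gauss B (embed0 A₀) t x' s y))) x :=
  Mop_comm (isSymm_embed0 (isHermitian_iff_isSymm.mp hA₀.isHermitian)) (s - t) i j
    (contDiff_infty.mp (contDiff_Dx (contDiff_gauss B (embed0 A₀) t s y) β) 2) x

/-- The components of the operator `M(s-t,x)` commute when applied to
derivatives of the Gaussian kernel: for all `i, j`, every multi-index `β`, all `t < s`
and `x, y`, `M_i M_j D^β Γ₀ = M_j M_i D^β Γ₀`. -/
theorem Mop_comm_on_gauss {r : ℕ} {p : Fin (r + 1) → ℕ}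
    (B : Matrix (Idx r p) (Idx r p) ℝ) (hB : IsKolB B)
    (A₀ : Matrix (Fin (p 0)) (Fin (p 0)) ℝ) (hA₀ : A₀.PosDef)
    (i j : Idx r p) (β : Idx r p → ℕ)
    (t s : ℝ) (hts : t < s) (x y : Idx r p → ℝ) :
    Mop B (embed0 A₀) (s - t) i
        (Mop B (embed0 A₀) (s - t) j (Dx β (fun x' => gauss B (embed0 A₀) t x' s y))) x
      = Mop B (embed0 A₀) (s - t) j
          (Mop B (embed0 A₀) (s - t) i (Dx β (fun x' => gauss B (embed0 A₀) t x' s y))) x :=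
  Mop_comm_on_gauss_general B A₀ hA₀ i j β t s x y

end
end

section
/- For every multi-index β ∈ ℕ_0^d, all t < s and x, y ∈ ℝ^d, the monomial identity y^β Γ_0(t,x;s,y) = (M(s-t,x))^β Γ_0(t,x;s,y) holds, where (M(s-t,x))^β denotes the composition M_1^{β_1} ∘ ⋯ ∘ M_d^{β_d} of the (mutually commuting on Γ_0 and its derivatives) component operators, and y^β = y_1^{β_1}⋯y_d^{β_d}. -/
open MeasureTheory Matrix Finset

noncomputable section

variable {r : ℕ} {p : Fin (r + 1) → ℕ}

/-!
Write `E = e^{(s-t)B}` and `C = C(s-t)`. As a function of `x`, `Γ₀(t,x;s,y)` is a constant times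
`exp(-½⟨C⁻¹(y - Ex), y - Ex⟩)`, so its gradient is `Γ₀ · Eᵀ C⁻¹ (y - Ex)`. Since `E M̄ Eᵀ = C`,
the first-order part of `M_i` contributes `(y - Ex)_i Γ₀`, which together with the multiplicative
part `(Ex)_i Γ₀` gives `M_i Γ₀ = y_i Γ₀`. This holds for every scalar multiple of `Γ₀` as well,
so iterating gives `M^β Γ₀ = y^β Γ₀`. If `C` is singular then `Γ₀ ≡ 0`, because
`|det C|^{-1/2}` is `0 ^ (-1/2) = 0` for `Real.rpow`, and both sides vanish.
-/

section MatrixExp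

attribute [local instance] Matrix.linftyOpNormedRing Matrix.linftyOpNormedAlgebra

lemma mexp_eq_exp (M : Matrix (Idx r p) (Idx r p) ℝ) : mexp M = NormedSpace.exp M := by
  ext i j
  exact (Pi.hasSum.1 (Pi.hasSum.1 (NormedSpace.exp_series_hasSum_exp' (𝕂 := ℝ) M) i) j).tsum_eq

end MatrixExp

lemma mexp_mul_mexp_neg (M : Matrix (Idx r p) (Idx r p) ℝ) : mexp M * mexp (-M) = 1 := by
  rw [mexp_eq_exp, mexp_eq_exp, ← Matrix.exp_add_of_commute M (-M) (Commute.neg_right rfl),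
    add_neg_cancel, NormedSpace.exp_zero]

lemma HasFDerivAt.dotProduct {𝕜 E ι : Type*} [NontriviallyNormedField 𝕜] [NormedAddCommGroup E]
    [NormedSpace 𝕜 E] [Fintype ι] {f g : E → ι → 𝕜} {f' g' : E →L[𝕜] ι → 𝕜} {x : E}
    (hf : HasFDerivAt f f' x) (hg : HasFDerivAt g g' x) :
    HasFDerivAt (fun z => f z ⬝ᵥ g z)
      (∑ i, (f x i • (ContinuousLinearMap.proj i).comp g'
        + g x i • (ContinuousLinearMap.proj i).comp f')) x :=
  HasFDerivAt.fun_sum fun i _ => (hasFDerivAt_pi'.1 hf i).mul (hasFDerivAt_pi'.1 hg i)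

lemma hasFDerivAt_sub_mulVec {ι : Type*} [Fintype ι] (E : Matrix ι ι ℝ) (y x : ι → ℝ) :
    HasFDerivAt (fun z => y - E *ᵥ z) (-LinearMap.toContinuousLinearMap (mulVecLin E)) x :=
  (LinearMap.toContinuousLinearMap (mulVecLin E)).hasFDerivAt.const_sub y

def gaussianProfile {ι : Type*} [Fintype ι] (c : ℝ) (Q E : Matrix ι ι ℝ) (y x : ι → ℝ) : ℝ :=
  c * Real.exp (-(1/2) * (Q *ᵥ (y - E *ᵥ x)) ⬝ᵥ (y - E *ᵥ x))

lemma fderiv_gaussianProfile_apply {ι : Type*} [Fintype ι] (c : ℝ) {Q : Matrix ι ι ℝ}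
    (hQ : Qᵀ = Q) (E : Matrix ι ι ℝ) (y x v : ι → ℝ) :
    fderiv ℝ (gaussianProfile c Q E y) x v
      = gaussianProfile c Q E y x * ((Q *ᵥ (y - E *ᵥ x)) ⬝ᵥ (E *ᵥ v)) := by
  have hw := hasFDerivAt_sub_mulVec E y x
  have hquad :=
    ((LinearMap.toContinuousLinearMap (mulVecLin Q)).hasFDerivAt.comp x hw).dotProduct hw
  have hg : HasFDerivAt (gaussianProfile c Q E y) _ x :=
    (hquad.const_mul (-(1/2) : ℝ)).exp.const_mul c
  have hsymm : (y - E *ᵥ x) ⬝ᵥ (Q *ᵥ (E *ᵥ v)) = (Q *ᵥ (y - E *ᵥ x)) ⬝ᵥ (E *ᵥ v) := by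
    rw [dotProduct_mulVec, ← mulVec_transpose, hQ]
  rw [hg.fderiv]
  simp only [FunLike.coe_smul, FunLike.coe_sum, Pi.smul_apply, Finset.sum_apply, FunLike.coe_add,
    Pi.add_apply, ContinuousLinearMap.comp_apply, FunLike.coe_neg, Pi.neg_apply,
    ContinuousLinearMap.proj_apply, Function.comp_apply, smul_eq_mul, Finset.sum_add_distrib]
  change c * (Real.exp (-(1/2) * (Q *ᵥ (y - E *ᵥ x)) ⬝ᵥ (y - E *ᵥ x)) * (-(1/2) *
    ((Q *ᵥ (y - E *ᵥ x)) ⬝ᵥ (-(E *ᵥ v)) + (y - E *ᵥ x) ⬝ᵥ (Q *ᵥ -(E *ᵥ v))))) = _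
  rw [mulVec_neg, dotProduct_neg, dotProduct_neg, hsymm, gaussianProfile]
  ring

lemma pdx_gaussianProfile (c : ℝ) {Q : Matrix (Idx r p) (Idx r p) ℝ} (hQ : Qᵀ = Q)
    (E : Matrix (Idx r p) (Idx r p) ℝ) (y x : Idx r p → ℝ) :
    (fun j => pdx j (gaussianProfile c Q E y) x)
      = gaussianProfile c Q E y x • (Eᵀ *ᵥ (Q *ᵥ (y - E *ᵥ x))) := by
  funext j
  rw [pdx, fderiv_gaussianProfile_apply c hQ, dotProduct_mulVec, dotProduct_single, mul_one,
    ← mulVec_transpose, Pi.smul_apply, smul_eq_mul]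

lemma embed0_transpose {A₀ : Matrix (Fin (p 0)) (Fin (p 0)) ℝ} (hA₀ : A₀ᵀ = A₀) :
    (embed0 A₀)ᵀ = embed0 (r := r) A₀ := by
  ext j k
  simp only [transpose_apply, embed0, of_apply]
  by_cases h : j.1 = 0 ∧ k.1 = 0
  · rw [dif_pos h, dif_pos ⟨h.2, h.1⟩, ← transpose_apply A₀, hA₀]
  · rw [dif_neg h, dif_neg fun h' => h ⟨h'.2, h'.1⟩]

lemma covMat_transpose (B : Matrix (Idx r p) (Idx r p) ℝ) {A : Matrix (Idx r p) (Idx r p) ℝ}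
    (hA : Aᵀ = A) (τ : ℝ) : (covMat B A τ)ᵀ = covMat B A τ := by
  have hsymm : ∀ u : ℝ, (mexp (u • B) * A * (mexp (u • B))ᵀ)ᵀ
      = mexp (u • B) * A * (mexp (u • B))ᵀ := fun u => by
    rw [transpose_mul, transpose_mul, transpose_transpose, hA, Matrix.mul_assoc]
  ext j k
  simp only [transpose_apply, covMat, of_apply]
  congr 1
  funext u
  exact congrFun (congrFun (hsymm u) j) k

lemma mexp_mul_Mbar_mul_transpose (B A : Matrix (Idx r p) (Idx r p) ℝ) (τ : ℝ) :
    mexp (τ • B) * Mbar B A τ * (mexp (τ • B))ᵀ = covMat B A τ := by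
  have h := mexp_mul_mexp_neg (τ • B)
  have hT : (mexp (-(τ • B)))ᵀ * (mexp (τ • B))ᵀ = 1 := by
    rw [← transpose_mul, h, transpose_one]
  calc mexp (τ • B) * Mbar B A τ * (mexp (τ • B))ᵀ
      = (mexp (τ • B) * mexp (-(τ • B))) * covMat B A τ
          * ((mexp (-(τ • B)))ᵀ * (mexp (τ • B))ᵀ) := by
        simp only [Mbar, Matrix.mul_assoc]
    _ = covMat B A τ := by rw [h, hT, Matrix.one_mul, Matrix.mul_one]

lemma Mop_gaussianProfile (B : Matrix (Idx r p) (Idx r p) ℝ) {A : Matrix (Idx r p) (Idx r p) ℝ}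
    (hA : Aᵀ = A) {τ : ℝ} (hC : IsUnit (covMat B A τ).det) (i : Idx r p) (c : ℝ)
    (y : Idx r p → ℝ) :
    Mop B A τ i (gaussianProfile c (covMat B A τ)⁻¹ (mexp (τ • B)) y)
      = gaussianProfile (c * y i) (covMat B A τ)⁻¹ (mexp (τ • B)) y := by
  have hQ : ((covMat B A τ)⁻¹)ᵀ = (covMat B A τ)⁻¹ := by
    rw [transpose_nonsing_inv, covMat_transpose B hA]
  have hid : mexp (τ • B) * Mbar B A τ * (mexp (τ • B))ᵀ * (covMat B A τ)⁻¹ = 1 := by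
    rw [mexp_mul_Mbar_mul_transpose, mul_nonsing_inv _ hC]
  funext x
  rw [Mop, pdx_gaussianProfile c hQ, mulVec_smul, mulVec_mulVec, mulVec_mulVec, hid, one_mulVec]
  simp only [Pi.smul_apply, Pi.sub_apply, smul_eq_mul, gaussianProfile]
  ring

lemma Mop_zero (B A : Matrix (Idx r p) (Idx r p) ℝ) (τ : ℝ) (i : Idx r p) :
    Mop B A τ i (fun _ => 0) = fun _ => 0 := by
  funext x
  simp [Mop, pdx, ← Pi.zero_def]

lemma Mpow_eq_of_forall_Mop_eq {B A : Matrix (Idx r p) (Idx r p) ℝ} {τ : ℝ}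
    {y : Idx r p → ℝ} {F : ℝ → (Idx r p → ℝ) → ℝ} (hF : ∀ i c, Mop B A τ i (F c) = F (c * y i))
    (β : Idx r p → ℕ) (c : ℝ) : Mpow B A τ β (F c) = F (c * ∏ i, y i ^ β i) := by
  have hiter : ∀ i k c, (Mop B A τ i)^[k] (F c) = F (c * y i ^ k) := by
    intro i k
    induction k with
    | zero => simp
    | succ k ih => intro c; rw [Function.iterate_succ_apply', ih, hF, pow_succ, mul_assoc]
  have hlist : ∀ (l : List (Idx r p)) c, l.foldr (fun i g => (Mop B A τ i)^[β i] g) (F c)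
      = F (c * (l.map fun i => y i ^ β i).prod) := by
    intro l
    induction l with
    | nil => simp
    | cons i l ih =>
      intro c
      rw [List.foldr_cons, ih, hiter, List.map_cons, List.prod_cons, mul_assoc,
        mul_comm (y i ^ β i)]
  rw [Mpow, hlist, Finset.prod_map_toList]

lemma Mpow_zero (B A : Matrix (Idx r p) (Idx r p) ℝ) (τ : ℝ) (β : Idx r p → ℕ) :
    Mpow B A τ β (fun _ => 0) = fun _ => 0 :=
  Mpow_eq_of_forall_Mop_eq (y := 0) (F := fun _ _ => 0) (fun i _ => Mop_zero B A τ i) β 0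

lemma gauss_eq_gaussianProfile (B A : Matrix (Idx r p) (Idx r p) ℝ) (t s : ℝ) (y : Idx r p → ℝ) :
    (fun x => gauss B A t x s y)
      = gaussianProfile ((2 * Real.pi) ^ (-(Fintype.card (Idx r p) : ℝ) / 2) *
          |(covMat B A (s - t)).det| ^ (-(1:ℝ) / 2))
        (covMat B A (s - t))⁻¹ (mexp ((s - t) • B)) y :=
  rfl

lemma gauss_eq_zero_of_det_eq_zero {B A : Matrix (Idx r p) (Idx r p) ℝ} {t s : ℝ}
    (h : (covMat B A (s - t)).det = 0) (y : Idx r p → ℝ) :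
    (fun x => gauss B A t x s y) = fun _ => 0 := by
  funext x
  rw [gauss, h, abs_zero, Real.zero_rpow (by norm_num), mul_zero, zero_mul]

theorem gauss_monomial_symmetry_general {r : ℕ} {p : Fin (r + 1) → ℕ}
    (B : Matrix (Idx r p) (Idx r p) ℝ)
    (A₀ : Matrix (Fin (p 0)) (Fin (p 0)) ℝ) (hA₀ : A₀.PosDef)
    (β : Idx r p → ℕ) (t s : ℝ) (x y : Idx r p → ℝ) :
    (∏ i, y i ^ β i) * gauss B (embed0 A₀) t x s y
      = Mpow B (embed0 A₀) (s - t) β (fun x' => gauss B (embed0 A₀) t x' s y) x := by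
  have hA : (embed0 A₀)ᵀ = embed0 (r := r) A₀ :=
    embed0_transpose (isHermitian_iff_isSymm.1 hA₀.1)
  by_cases hC : IsUnit (covMat B (embed0 A₀) (s - t)).det
  · rw [gauss_eq_gaussianProfile,
      Mpow_eq_of_forall_Mop_eq (fun i c => Mop_gaussianProfile B hA hC i c y)]
    simp only [gaussianProfile, gauss]
    ring
  · have hzero := gauss_eq_zero_of_det_eq_zero (not_ne_iff.1 (mt isUnit_iff_ne_zero.2 hC)) y
    rw [hzero, Mpow_zero, congrFun hzero x, mul_zero]

/-- For every multi-index `β`, all `t < s` and `x, y`, the monomial identity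
`y^β Γ₀(t,x;s,y) = (M(s-t,x))^β Γ₀(t,x;s,y)` holds. -/
theorem gauss_monomial_symmetry {r : ℕ} {p : Fin (r + 1) → ℕ}
    (B : Matrix (Idx r p) (Idx r p) ℝ) (hB : IsKolB B)
    (A₀ : Matrix (Fin (p 0)) (Fin (p 0)) ℝ) (hA₀ : A₀.PosDef)
    (β : Idx r p → ℕ) (t s : ℝ) (hts : t < s) (x y : Idx r p → ℝ) :
    (∏ i, y i ^ β i) * gauss B (embed0 A₀) t x s y
      = Mpow B (embed0 A₀) (s - t) β (fun x' => gauss B (embed0 A₀) t x' s y) x :=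
  gauss_monomial_symmetry_general B A₀ hA₀ β t s x y
end
end
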